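/- Let L ⊆ Σ^ω and let (x, x₁, x₂) be a certificate for non-DBW-recognizability of L. Then there exists a DBW-refuter R for L such that for every y ∈ {acc, rej}^ω: if y(j) = acc for infinitely many j then R(y) ∈ x·(x₁*·x₂)^ω, and if y(j) = acc for only finitely many j then R(y) ∈ x·(x₁+x₂)*·x₁^ω. -/

import Mathlib

/-! The refuter emits `x` and then an endless sequence of blocks, each `x₁` or `x₂`: the next
block is `x₂` exactly when `acc` was read while the current block was being emitted. As blocks
are nonempty, these reading windows partition time, so finitely many `acc`s eventually give only
`x₁`-blocks (a word of `x·(x₁+x₂)*·x₁^ω`), while infinitely many give infinitely many `x₂`-blocks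
(a word of `x·(x₁*·x₂)^ω`). Only the rest of the current block and one bit need to be stored,
so the machine is finite-state. -/

/-- An (A/α)-transducer: reads letters of `A`, outputs letters of `α`. -/
structure Transducer (A α : Type) where
  S : Type
  [fin : Fintype S]
  init : S
  ρ : S → A → S
  τ : S → α

attribute [instance] Transducer.fin

def Transducer.run {A α : Type} (T : Transducer A α) (y : ℕ → A) : ℕ → T.S
  | 0 => T.init
  | n + 1 => T.ρ (T.run y n) (y n)

/-- Output with environment initiation: output letter `j` is emitted at state `s_{j+1}`. -/
def Transducer.out {A α : Type} (T : Transducer A α) (y : ℕ → A) : ℕ → α :=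
  fun j => T.τ (T.run y (j + 1))

/-- A DBW-refuter for `L`: a ({acc,rej}/Σ)-transducer (with `true` = acc, `false` = rej)
such that for every input `y`, the output is in `L` iff `y` has only finitely many acc's. -/
def DBWRefuter {α : Type} (L : Set (ℕ → α)) (R : Transducer Bool α) : Prop :=
  ∀ y : ℕ → Bool, R.out y ∈ L ↔ {j | y j = true}.Finite

/-- `u` is a prefix of the infinite word `w`. -/
def HasPrefixWord {α : Type} (w : ℕ → α) (u : List α) : Prop :=
  ∀ i : Fin u.length, w i.1 = u.get i

/-- The ω-language `x·(x₁+x₂)*·x₁^ω`. -/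
def LangA {α : Type} (x x₁ x₂ : List α) : Set (ℕ → α) :=
  { w | ∃ ws : List (List α), (∀ u ∈ ws, u = x₁ ∨ u = x₂) ∧
        ∀ n, HasPrefixWord w (x ++ ws.flatten ++ (List.replicate n x₁).flatten) }

/-- The ω-language `x·(x₁*·x₂)^ω`. -/
def LangB {α : Type} (x x₁ x₂ : List α) : Set (ℕ → α) :=
  { w | ∃ j : ℕ → ℕ, ∀ n, HasPrefixWord w
        (x ++ ((List.range n).map (fun i => (List.replicate (j i) x₁).flatten ++ x₂)).flatten) }

section Words

variable {α : Type}

theorem hasPrefixWord_append_iff (w : ℕ → α) (u v : List α) :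
    HasPrefixWord w (u ++ v) ↔
      HasPrefixWord w u ∧ ∀ (i : ℕ) (hi : i < v.length), w (u.length + i) = v[i] := by
  constructor
  · intro h
    refine ⟨fun i => ?_, fun i hi => ?_⟩
    · simpa [List.getElem_append_left i.2] using h ⟨i, by simp; omega⟩
    · simpa using h ⟨u.length + i, by simp; omega⟩
  · rintro ⟨hu, hv⟩ ⟨i, hi⟩
    simp only [List.get_eq_getElem, List.getElem_append]
    split_ifs with h
    · exact hu ⟨i, h⟩
    · simpa [Nat.add_sub_cancel' (not_lt.1 h)] using hv (i - u.length) (by simp at hi; omega)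

theorem HasPrefixWord.tail {w : ℕ → α} {a : α} {u : List α} (h : HasPrefixWord w (a :: u)) :
    HasPrefixWord (fun n => w (n + 1)) u :=
  fun i => h ⟨i + 1, by simp⟩

variable {x x₁ x₂ : List α}

theorem map_cond_range_eq_replicate {c : ℕ → Bool} {a m : ℕ}
    (hc : ∀ i < m, c (a + i) = false) :
    (List.range m).map (fun i => cond (c (a + i)) x₂ x₁) = List.replicate m x₁ := by
  rw [List.eq_replicate_iff]
  refine ⟨by simp, fun b hb => ?_⟩
  obtain ⟨i, hi, rfl⟩ := List.mem_map.1 hb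
  simp [hc i (List.mem_range.1 hi)]

theorem mem_langA_of_eventually_false {w : ℕ → α} {c : ℕ → Bool} {N : ℕ}
    (hw : ∀ K, HasPrefixWord w (x ++ ((List.range K).map fun k => cond (c k) x₂ x₁).flatten))
    (hN : ∀ k, N ≤ k → c k = false) : w ∈ LangA x x₁ x₂ := by
  refine ⟨(List.range N).map fun k => cond (c k) x₂ x₁, fun u hu => ?_, fun n => ?_⟩
  · obtain ⟨k, -, rfl⟩ := List.mem_map.1 hu
    cases c k <;> simp
  · have htail : (List.range n).map (fun i => cond (c (N + i)) x₂ x₁) = List.replicate n x₁ :=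
      map_cond_range_eq_replicate fun i _ => hN _ (Nat.le_add_right N i)
    simpa [List.range_add, List.map_append, List.flatten_append, List.map_map,
      Function.comp_def, htail] using hw (N + n)

theorem flatten_map_cond_range_succ {c : ℕ → Bool} {a m : ℕ}
    (hfalse : ∀ i < m, c (a + i) = false) (htrue : c (a + m) = true) :
    ((List.range (m + 1)).map fun i => cond (c (a + i)) x₂ x₁).flatten
      = (List.replicate m x₁).flatten ++ x₂ := by
  rw [List.range_succ, List.map_append, map_cond_range_eq_replicate hfalse]
  simp [htrue]

theorem mem_langB_of_infinite {w : ℕ → α} {c : ℕ → Bool}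
    (hw : ∀ K, HasPrefixWord w (x ++ ((List.range K).map fun k => cond (c k) x₂ x₁).flatten))
    (hc : {k | c k = true}.Infinite) : w ∈ LangB x x₁ x₂ := by
  set e := Nat.nth fun k => c k = true
  -- the `n`-th group `x₁ ^ j n · x₂` consists of the blocks `start n, …, e n`
  let start : ℕ → ℕ
    | 0 => 0
    | n + 1 => e n + 1
  have he : StrictMono e := Nat.nth_strictMono hc
  have hstart : ∀ n, start n ≤ e n := by
    rintro (_ | n)
    · exact Nat.zero_le _
    · exact he (Nat.lt_succ_self n)
  have hfalse : ∀ n k, start n ≤ k → k < e n → c k = false := by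
    rintro (_ | n) k hk hke
    all_goals
      by_contra hck
      rw [Bool.not_eq_false] at hck
    · have : e 0 ≤ k := by
        show Nat.nth _ 0 ≤ k
        rw [Nat.nth_zero]
        exact Nat.sInf_le hck
      omega
    · exact absurd (Nat.le_nth_of_lt_nth_succ hke hck) (not_le.2 hk)
  have hgroups : ∀ n, ((List.range n).map
      fun i => (List.replicate (e i - start i) x₁).flatten ++ x₂).flatten
        = ((List.range (start n)).map fun k => cond (c k) x₂ x₁).flatten := by
    intro n
    induction n with
    | zero => rfl
    | succ n ih =>
      have hlen : start (n + 1) = start n + (e n - start n + 1) := by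
        have := hstart n; show e n + 1 = _; omega
      rw [List.range_succ, List.map_append, List.flatten_append, ih, hlen, List.range_add,
        List.map_append, List.flatten_append, List.map_map]
      simp only [Function.comp_def]
      rw [flatten_map_cond_range_succ (fun i hi => hfalse n _ (by omega) (by omega))
        (by rw [Nat.add_sub_cancel' (hstart n)]; exact Nat.nth_mem_of_infinite hc n)]
      simp
  exact ⟨fun i => e i - start i, fun n => by rw [hgroups]; exact hw _⟩

end Words

def stateSeq {A Q : Type} (q₀ : Q) (δ : Q → A → Q) (y : ℕ → A) : ℕ → Q
  | 0 => q₀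
  | n + 1 => δ (stateSeq q₀ δ y n) (y n)

noncomputable def Transducer.ofMachine {A α Q : Type} (I : Set Q) (hI : I.Finite) (q₀ : Q)
    (h₀ : q₀ ∈ I) (δ : Q → A → Q) (hδ : ∀ a, Set.MapsTo (δ · a) I I) (τ : Q → α) :
    Transducer A α where
  S := I
  fin := hI.fintype
  init := ⟨q₀, h₀⟩
  ρ q a := ⟨δ q a, hδ a q.2⟩
  τ q := τ q

theorem Transducer.out_ofMachine {A α Q : Type} (I : Set Q) (hI : I.Finite) (q₀ : Q)
    (h₀ : q₀ ∈ I) (δ : Q → A → Q) (hδ : ∀ a, Set.MapsTo (δ · a) I I) (τ : Q → α)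
    (y : ℕ → A) (j : ℕ) :
    (Transducer.ofMachine I hI q₀ h₀ δ hδ τ).out y j = τ (stateSeq q₀ δ y (j + 1)) := by
  have hrun : ∀ n, Subtype.val ((Transducer.ofMachine I hI q₀ h₀ δ hδ τ).run y n) =
      stateSeq q₀ δ y n := by
    intro n
    induction n with
    | zero => rfl
    | succ n ih => exact congrArg (δ · (y n)) ih
  exact congrArg τ (hrun (j + 1))

theorem StrictMono.exists_le_lt_succ {T : ℕ → ℕ} (hT : StrictMono T) {m : ℕ} (hm : T 0 ≤ m) :
    ∃ k, T k ≤ m ∧ m < T (k + 1) := by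
  induction m, hm using Nat.le_induction with
  | base => exact ⟨0, le_rfl, hT Nat.zero_lt_one⟩
  | succ m _ ih =>
    obtain ⟨k, hkm, hmk⟩ := ih
    by_cases h : m + 1 < T (k + 1)
    · exact ⟨k, by omega, h⟩
    · exact ⟨k + 1, by omega, by have := hT (Nat.lt_add_one (k + 1)); omega⟩

namespace CertificateRefuter

variable {α : Type} (x x₁ x₂ : List α)

/-- In a state `(w, f)` the letter just emitted is the head of `w`, the tail of `w` is the rest
of the current block, and `f` records whether `acc` has been read during the current block;
at the end of a block the next one is `x₂` if it has, `x₁` otherwise. -/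
def step : List α × Bool → Bool → List α × Bool
  | (_ :: a :: r, f), b => (a :: r, f || b)
  | (_, f), b => (cond (f || b) x₂ x₁, false)

def reachable (d : α) : Set (List α × Bool) :=
  {w | w ∈ (d :: x).tails ∨ w ∈ x₁.tails ∨ w ∈ x₂.tails} ×ˢ Set.univ

theorem reachable_finite (d : α) : (reachable x x₁ x₂ d).Finite :=
  ((List.finite_toSet _).union ((List.finite_toSet _).union (List.finite_toSet _))).prod
    Set.finite_univ

theorem mapsTo_step (d : α) (b : Bool) :
    Set.MapsTo (step x₁ x₂ · b) (reachable x x₁ x₂ d) (reachable x x₁ x₂ d) := by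
  rintro ⟨w, f⟩ ⟨hw, -⟩
  refine ⟨?_, Set.mem_univ _⟩
  match w, hw with
  | c :: a :: r, hw =>
    simp only [step, Set.mem_ofPred_eq, List.mem_tails] at hw ⊢
    have hsuf : a :: r <:+ c :: a :: r := List.suffix_cons _ _
    rcases hw with hw | hw | hw
    exacts [Or.inl (hsuf.trans hw), Or.inr (Or.inl (hsuf.trans hw)),
      Or.inr (Or.inr (hsuf.trans hw))]
  | [], _ | [_], _ =>
    simp only [step]
    cases f || b <;> simp [List.mem_tails]

/-- `d` is a dummy letter for the initial state, whose output is never read. -/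
noncomputable def refuter (d : α) : Transducer Bool α :=
  Transducer.ofMachine (reachable x x₁ x₂ d) (reachable_finite x x₁ x₂ d) (d :: x, false)
    ⟨Or.inl (List.mem_tails _ _ |>.2 (List.suffix_refl _)), Set.mem_univ _⟩ (step x₁ x₂)
    (mapsTo_step x x₁ x₂ d) fun q => q.1.headD d


variable (d : α) (y : ℕ → Bool)

/-- `blockAt k = (T, w)`: the machine enters block `k`, which is `w`, at time `T`. Block `0` is
`x` behind the dummy letter `d`. -/
def blockAt : ℕ → ℕ × List α
  | 0 => (0, d :: x)
  | k + 1 => ((blockAt k).1 + (blockAt k).2.length,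
      cond ((List.range' (blockAt k).1 (blockAt k).2.length).any y) x₂ x₁)

def blockFlag (k : ℕ) : Bool :=
  (List.range' (blockAt x x₁ x₂ d y k).1 (blockAt x x₁ x₂ d y k).2.length).any y

theorem blockAt_succ (k : ℕ) :
    blockAt x x₁ x₂ d y (k + 1) =
      ((blockAt x x₁ x₂ d y k).1 + (blockAt x x₁ x₂ d y k).2.length,
        cond (blockFlag x x₁ x₂ d y k) x₂ x₁) := rfl

variable {x x₁ x₂}

theorem blockAt_snd_ne_nil (h₁ : x₁ ≠ []) (h₂ : x₂ ≠ []) :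
    ∀ k, (blockAt x x₁ x₂ d y k).2 ≠ []
  | 0 => List.cons_ne_nil _ _
  | k + 1 => by
    show cond (blockFlag x x₁ x₂ d y k) x₂ x₁ ≠ []
    cases blockFlag x x₁ x₂ d y k <;> assumption

theorem stateSeq_add_of_lt {j : ℕ} {w : List α}
    (hj : stateSeq (d :: x, false) (step x₁ x₂) y j = (w, false)) {i : ℕ} (hi : i < w.length) :
    stateSeq (d :: x, false) (step x₁ x₂) y (j + i) = (w.drop i, (List.range' j i).any y) := by
  induction i with
  | zero => simpa using hj
  | succ i ih =>
    show step x₁ x₂ (stateSeq (d :: x, false) (step x₁ x₂) y (j + i)) (y (j + i)) = _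
    rw [ih (by omega), List.drop_eq_getElem_cons (by omega : i < w.length),
      List.drop_eq_getElem_cons hi, List.range'_concat]
    simp [step]

theorem stateSeq_add_length {j : ℕ} {w : List α}
    (hj : stateSeq (d :: x, false) (step x₁ x₂) y j = (w, false)) (hw : w ≠ []) :
    stateSeq (d :: x, false) (step x₁ x₂) y (j + w.length) =
      (cond ((List.range' j w.length).any y) x₂ x₁, false) := by
  obtain ⟨n, hn⟩ := Nat.exists_eq_add_one_of_ne_zero (by simpa using hw : w.length ≠ 0)
  rw [hn]
  show step x₁ x₂ (stateSeq (d :: x, false) (step x₁ x₂) y (j + n)) (y (j + n)) = _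
  rw [stateSeq_add_of_lt d y hj (by omega), List.drop_eq_getElem_cons (by omega : n < w.length),
    List.drop_eq_nil_of_le (by omega), List.range'_concat]
  simp [step]

theorem stateSeq_blockAt (h₁ : x₁ ≠ []) (h₂ : x₂ ≠ []) (k : ℕ) :
    stateSeq (d :: x, false) (step x₁ x₂) y (blockAt x x₁ x₂ d y k).1 =
      ((blockAt x x₁ x₂ d y k).2, false) := by
  induction k with
  | zero => rfl
  | succ k ih => exact stateSeq_add_length d y ih (blockAt_snd_ne_nil d y h₁ h₂ k)

theorem length_flatten_blockAt (K : ℕ) :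
    ((List.range K).map fun k => (blockAt x x₁ x₂ d y k).2).flatten.length =
      (blockAt x x₁ x₂ d y K).1 := by
  induction K with
  | zero => rfl
  | succ K ih => simp [List.range_succ, ih, blockAt_succ]

theorem hasPrefixWord_flatten_blockAt (h₁ : x₁ ≠ []) (h₂ : x₂ ≠ []) (K : ℕ) :
    HasPrefixWord (fun n => (stateSeq (d :: x, false) (step x₁ x₂) y n).1.headD d)
      ((List.range K).map fun k => (blockAt x x₁ x₂ d y k).2).flatten := by
  induction K with
  | zero => exact fun i => absurd i.2 (by simp)
  | succ K ih =>
    rw [List.range_succ, List.map_append, List.flatten_append, hasPrefixWord_append_iff]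
    refine ⟨ih, fun i hi => ?_⟩
    simp only [List.map_cons, List.map_nil, List.flatten_cons, List.flatten_nil,
      List.append_nil] at hi ⊢
    rw [length_flatten_blockAt, stateSeq_add_of_lt d y (stateSeq_blockAt d y h₁ h₂ K) hi]
    simp [hi]

theorem hasPrefixWord_refuter_out (h₁ : x₁ ≠ []) (h₂ : x₂ ≠ []) (K : ℕ) :
    HasPrefixWord ((refuter x x₁ x₂ d).out y)
      (x ++ ((List.range K).map fun k => cond (blockFlag x x₁ x₂ d y k) x₂ x₁).flatten) := by
  have h := hasPrefixWord_flatten_blockAt (x := x) d y h₁ h₂ (K + 1)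
  rw [List.range_succ_eq_map, List.map_cons, List.flatten_cons, List.map_map] at h
  convert h.tail using 1
  · exact funext fun j => Transducer.out_ofMachine _ _ _ _ _ _ _ y j
  · rfl


theorem blockFlag_eq_true_iff (k : ℕ) :
    blockFlag x x₁ x₂ d y k = true ↔
      ∃ m, (blockAt x x₁ x₂ d y k).1 ≤ m ∧ m < (blockAt x x₁ x₂ d y (k + 1)).1 ∧ y m = true := by
  simp [blockFlag, blockAt_succ, List.any_eq_true, List.mem_range'_1, and_assoc]

theorem strictMono_blockAt_fst (h₁ : x₁ ≠ []) (h₂ : x₂ ≠ []) :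
    StrictMono fun k => (blockAt x x₁ x₂ d y k).1 :=
  strictMono_nat_of_lt_succ fun k => by
    have := List.length_pos_iff.2 (blockAt_snd_ne_nil (x := x) d y h₁ h₂ k)
    simp only [blockAt_succ]
    omega

theorem blockFlag_eventually_false (h₁ : x₁ ≠ []) (h₂ : x₂ ≠ [])
    (hy : {j | y j = true}.Finite) : ∃ N, ∀ k, N ≤ k → blockFlag x x₁ x₂ d y k = false := by
  obtain ⟨N, hN⟩ := hy.bddAbove
  refine ⟨N + 1, fun k hk => Bool.eq_false_iff.2 fun hflag => ?_⟩
  obtain ⟨m, hkm, -, hm⟩ := (blockFlag_eq_true_iff d y k).1 hflag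
  have hk_le : k ≤ (blockAt x x₁ x₂ d y k).1 := (strictMono_blockAt_fst d y h₁ h₂).le_apply
  have hmN : m ≤ N := hN hm
  omega

theorem blockFlag_infinite (h₁ : x₁ ≠ []) (h₂ : x₂ ≠ [])
    (hy : {j | y j = true}.Infinite) : {k | blockFlag x x₁ x₂ d y k = true}.Infinite := by
  have hT := strictMono_blockAt_fst (x := x) d y h₁ h₂
  refine Set.infinite_of_forall_exists_gt fun K => ?_
  obtain ⟨m, hm, hKm⟩ := hy.exists_gt (blockAt x x₁ x₂ d y (K + 1)).1
  obtain ⟨k, hkm, hmk⟩ := hT.exists_le_lt_succ (Nat.zero_le m)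
  refine ⟨k, (blockFlag_eq_true_iff d y k).2 ⟨m, hkm, hmk, hm⟩, ?_⟩
  by_contra hkK
  have := hT.monotone (Nat.add_le_add_right (not_lt.1 hkK) 1)
  omega

theorem refuter_out_mem_langA (h₁ : x₁ ≠ []) (h₂ : x₂ ≠ []) (hy : {j | y j = true}.Finite) :
    (refuter x x₁ x₂ d).out y ∈ LangA x x₁ x₂ :=
  have ⟨_, hN⟩ := blockFlag_eventually_false d y h₁ h₂ hy
  mem_langA_of_eventually_false (hasPrefixWord_refuter_out d y h₁ h₂) hN

theorem refuter_out_mem_langB (h₁ : x₁ ≠ []) (h₂ : x₂ ≠ []) (hy : ¬{j | y j = true}.Finite) :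
    (refuter x x₁ x₂ d).out y ∈ LangB x x₁ x₂ :=
  mem_langB_of_infinite (hasPrefixWord_refuter_out d y h₁ h₂) (blockFlag_infinite d y h₁ h₂ hy)

end CertificateRefuter

open CertificateRefuter in
theorem stmt_6_general {Sig : Type} (L : Set (ℕ → Sig)) (x x₁ x₂ : List Sig)
    (h₁ : x₁ ≠ []) (h₂ : x₂ ≠ [])
    (hA : LangA x x₁ x₂ ⊆ L) (hB : LangB x x₁ x₂ ∩ L = ∅) :
    ∃ R : Transducer Bool Sig, DBWRefuter L R ∧
      ∀ y : ℕ → Bool,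
        (¬ {j | y j = true}.Finite → R.out y ∈ LangB x x₁ x₂) ∧
        ({j | y j = true}.Finite → R.out y ∈ LangA x x₁ x₂) := by
  refine ⟨refuter x x₁ x₂ (x₁.head h₁), fun y => ⟨fun hL => ?_, fun hy => ?_⟩, fun y =>
    ⟨refuter_out_mem_langB _ y h₁ h₂, refuter_out_mem_langA _ y h₁ h₂⟩⟩
  · by_contra hy
    exact hB.subset ⟨refuter_out_mem_langB _ y h₁ h₂ hy, hL⟩
  · exact hA (refuter_out_mem_langA _ y h₁ h₂ hy)

/-- From a certificate `(x, x₁, x₂)` for non-DBW-recognizability of `L` one can build a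
DBW-refuter `R` for `L` such that inputs with infinitely many acc's produce words in
`x·(x₁*·x₂)^ω` and inputs with finitely many acc's produce words in `x·(x₁+x₂)*·x₁^ω`. -/
theorem stmt_6 {Sig : Type} [Fintype Sig] (L : Set (ℕ → Sig)) (x x₁ x₂ : List Sig)
    (h₁ : x₁ ≠ []) (h₂ : x₂ ≠ [])
    (hA : LangA x x₁ x₂ ⊆ L) (hB : LangB x x₁ x₂ ∩ L = ∅) :
    ∃ R : Transducer Bool Sig, DBWRefuter L R ∧
      ∀ y : ℕ → Bool,
        (¬ {j | y j = true}.Finite → R.out y ∈ LangB x x₁ x₂) ∧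
        ({j | y j = true}.Finite → R.out y ∈ LangA x x₁ x₂) :=
  stmt_6_general L x x₁ x₂ h₁ h₂ hA hB
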